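/- Let S be a subset of {1,...,n}. Then there exists an integer m with |S| ≤ m ≤ O(|S|² log n) such that for all distinct i, j ∈ S, i ≢ j (mod m). More precisely, there exists a constant C such that for all n ≥ 2 and all S ⊆ {1,...,n}, some m with |S| ≤ m ≤ C·|S|²·log n satisfies: i mod m ≠ j mod m for all distinct i, j ∈ S. -/

import Mathlib

/-!
Let `m` be the least positive modulus separating `S`. Every `m' < m` identifies two elements
of `S`, so `m'` divides the product of all differences `|i - j|`, `i ≠ j ∈ S`; hence so does
`lcm(1, …, m - 1)`, which contains the central binomial coefficient `C(2t, t) ≥ 2 ^ t` for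
`t = ⌊(m - 1) / 2⌋`. The product is at most `n ^ (|S| ^ 2)`, so taking logarithms gives
`m = O(|S| ^ 2 log n)`. Pigeonhole gives `|S| ≤ m`.
-/

open Finset

theorem Nat.two_pow_le_centralBinom (n : ℕ) : 2 ^ n ≤ n.centralBinom := by
  induction n with
  | zero => simp
  | succ n ih =>
    refine Nat.le_of_mul_le_mul_left ?_ n.succ_pos
    calc (n + 1) * 2 ^ (n + 1) ≤ 2 * (2 * n + 1) * 2 ^ n := by
          rw [pow_succ]; nlinarith [Nat.one_le_two_pow (n := n)]
      _ ≤ 2 * (2 * n + 1) * n.centralBinom := by gcongr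
      _ = (n + 1) * (n + 1).centralBinom := (Nat.succ_mul_centralBinom_succ n).symm

theorem Nat.two_pow_le_lcmUpto_two_mul (n : ℕ) : 2 ^ n ≤ lcmUpto (2 * n) :=
  (two_pow_le_centralBinom n).trans <| le_of_dvd (lcmUpto_pos _) <| by
    rw [centralBinom_eq_two_mul_choose]
    exact Chebyshev.choose_dvd_lcmUpto (by omega)

theorem Nat.lcmUpto_dvd_lcmUpto {m n : ℕ} (h : m ≤ n) : lcmUpto m ∣ lcmUpto n :=
  Finset.lcm_mono (Icc_subset_Icc_right h)

def distProd (S : Finset ℕ) : ℕ := ∏ p ∈ S.offDiag, Nat.dist p.1 p.2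

theorem distProd_pos (S : Finset ℕ) : 0 < distProd S :=
  prod_pos fun _ hp => Nat.dist_pos_of_ne (mem_offDiag.mp hp).2.2

section

variable {S : Finset ℕ}

theorem distProd_le {n : ℕ} (hS : S ⊆ Icc 1 n) : distProd S ≤ n ^ (#S ^ 2) := by
  calc distProd S ≤ n ^ #S.offDiag := by
        refine prod_le_pow_card _ _ _ fun p hp => ?_
        obtain ⟨hi, hj, -⟩ := mem_offDiag.mp hp
        have := mem_Icc.mp (hS hi)
        have := mem_Icc.mp (hS hj)
        unfold Nat.dist
        omega
    _ ≤ n ^ (#S ^ 2) := by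
        rcases Nat.eq_zero_or_pos n with rfl | hn
        · simp_all [subset_empty.mp hS]
        · exact Nat.pow_le_pow_right hn (by rw [offDiag_card, sq]; exact Nat.sub_le _ _)

theorem dvd_distProd_of_not_injOn {m : ℕ} (h : ¬ Set.InjOn (· % m) S) :
    m ∣ distProd S := by
  simp only [Set.InjOn, not_forall] at h
  obtain ⟨i, hi, j, hj, hmod, hij⟩ := h
  have hdist : m ∣ Nat.dist i j :=
    dvd_add (Nat.dvd_of_mod_eq_zero (Nat.sub_mod_eq_zero_of_mod_eq hmod))
      (Nat.dvd_of_mod_eq_zero (Nat.sub_mod_eq_zero_of_mod_eq hmod.symm))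
  exact hdist.trans (dvd_prod_of_mem _ (a := (i, j)) (mem_offDiag.mpr ⟨hi, hj, hij⟩))

theorem lcmUpto_dvd_distProd {M : ℕ}
    (h : ∀ m, 0 < m → m ≤ M → ¬ Set.InjOn (· % m) S) : Nat.lcmUpto M ∣ distProd S :=
  Finset.lcm_dvd fun m hm => by
    have := mem_Icc.mp hm
    exact dvd_distProd_of_not_injOn (h m this.1 this.2)

theorem card_le_of_injOn_mod {m : ℕ} (hm : 0 < m)
    (h : Set.InjOn (· % m) S) : #S ≤ m := by
  simpa using card_le_card_of_injOn _ (fun i _ => mem_range.mpr (Nat.mod_lt i hm)) h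

end

-- Positivity is the point: `i % 0 = i`, so `0` separates every set.
theorem exists_pos_injOn_mod (S : Finset ℕ) : ∃ m, 0 < m ∧ Set.InjOn (· % m) S := by
  refine ⟨S.sup id + 1, Nat.succ_pos _, fun i hi j hj hij => ?_⟩
  have hlt : ∀ a ∈ S, a < S.sup id + 1 := fun a ha => Nat.lt_succ_of_le (le_sup (f := id) ha)
  simpa [Nat.mod_eq_of_lt (hlt i hi), Nat.mod_eq_of_lt (hlt j hj)] using hij

-- `log 2 > 2 / 3` turns `t log 2 ≤ k² log n` into `2t ≤ 3k² log n`, and `2 ≤ 3k² log n`.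
theorem le_six_mul_sq_mul_log {m k n : ℕ} (hn : 2 ≤ n) (hk : 1 ≤ k)
    (h : 2 ^ ((m - 1) / 2) ≤ n ^ (k ^ 2)) : (m : ℝ) ≤ 6 * k ^ 2 * Real.log n := by
  set t := (m - 1) / 2
  have hm : (m : ℝ) ≤ 2 * t + 2 := by exact_mod_cast (by omega : m ≤ 2 * t + 2)
  have hlog : t * Real.log 2 ≤ (k ^ 2 : ℕ) * Real.log n := by
    rw [← Real.log_pow, ← Real.log_pow]
    exact Real.log_le_log (by positivity) (by exact_mod_cast h)
  push_cast at hlog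
  have hlog2 := Real.log_two_gt_d9
  have hlogn : Real.log 2 ≤ Real.log n := Real.log_le_log (by norm_num) (by exact_mod_cast hn)
  have hk2 : (1 : ℝ) ≤ k ^ 2 := by exact_mod_cast Nat.one_le_pow _ _ hk
  nlinarith [(by positivity : (0 : ℝ) ≤ t)]

/-- There is a constant `C > 0` such that for all `n ≥ 2` and every subset `S` of
`{1, ..., n}`, there is an integer `m` with `|S| ≤ m ≤ C·|S|²·log n` such that
the elements of `S` are pairwise incongruent modulo `m`. -/
theorem stmt_0 :
    ∃ C : ℝ, 0 < C ∧ ∀ n : ℕ, 2 ≤ n → ∀ S : Finset ℕ, S ⊆ Finset.Icc 1 n →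
      ∃ m : ℕ, S.card ≤ m ∧ (m : ℝ) ≤ C * (S.card : ℝ)^2 * Real.log n ∧
        ∀ i ∈ S, ∀ j ∈ S, i ≠ j → i % m ≠ j % m := by
  refine ⟨6, by norm_num, fun n hn S hS => ?_⟩
  rcases S.eq_empty_or_nonempty with rfl | hne
  · exact ⟨0, by simp, by simp, by simp⟩
  classical
  let m := Nat.find (exists_pos_injOn_mod S)
  obtain ⟨hm, hinj⟩ : 0 < m ∧ Set.InjOn (· % m) S := Nat.find_spec (exists_pos_injOn_mod S)
  have hmin : ∀ m', 0 < m' → m' ≤ m - 1 → ¬ Set.InjOn (· % m') S :=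
    fun m' hpos hle hinj' => Nat.find_min (exists_pos_injOn_mod S) (by omega) ⟨hpos, hinj'⟩
  have hpow : 2 ^ ((m - 1) / 2) ≤ n ^ (#S ^ 2) :=
    calc 2 ^ ((m - 1) / 2) ≤ Nat.lcmUpto (2 * ((m - 1) / 2)) := Nat.two_pow_le_lcmUpto_two_mul _
      _ ≤ distProd S := Nat.le_of_dvd (distProd_pos S) <|
          (Nat.lcmUpto_dvd_lcmUpto (by omega)).trans (lcmUpto_dvd_distProd hmin)
      _ ≤ n ^ (#S ^ 2) := distProd_le hS
  exact ⟨m, card_le_of_injOn_mod hm hinj, le_six_mul_sq_mul_log hn hne.card_pos hpow,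
    fun i hi j hj hij => mt (hinj hi hj) hij⟩
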